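/- arXiv:1602.00435 — 2 statements merged into one kernel-verified Lean document; each statement's English description precedes it below -/
import Mathlib

section
/- Let A, B, C' be matrices over a field (or an integral domain) such that row i of C' differs from row i of the product A·B in at least one entry. If v is a uniformly random vector in {0,1}^r (coordinates chosen independently and uniformly), then the probability that the i-th coordinate of C'·v equals the i-th coordinate of A·(B·v) is at most 1/2. -/
open Finset Matrix

lemma Finset.two_mul_card_filter_le_of_injective {α : Type*} [Fintype α] (P : α → Prop)
    [DecidablePred P] {σ : α → α} (hσ : Function.Injective σ) (h : ∀ a, P a → ¬ P (σ a)) :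
    2 * #{a | P a} ≤ Fintype.card α := by
  have hle : #{a | P a} ≤ #{a | ¬ P a} :=
    card_le_card_of_injOn σ (fun a ha => by simp_all) hσ.injOn
  have hsum : #{a | P a} + #{a | ¬ P a} = Fintype.card α := by
    rw [card_filter_add_card_filter_not, card_univ]
  omega

section ZeroOneVectors

variable {ι R : Type*} [DecidableEq ι] [Ring R]

lemma isUnit_natCast_add_one_sub_natCast (x : Fin 2) :
    IsUnit ((((x + 1 : Fin 2) : ℕ) : R) - ((x : ℕ) : R)) := by
  fin_cases x <;> simp

lemma natCast_add_single_one_sub (v : ι → Fin 2) (k : ι) :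
    (fun j => (((v + Pi.single k 1 : ι → Fin 2) j : ℕ) : R)) - (fun j => ((v j : ℕ) : R))
      = Pi.single k ((((v k + 1 : Fin 2) : ℕ) : R) - ((v k : ℕ) : R)) := by
  ext j
  rcases eq_or_ne j k with rfl | hj <;> simp [*]

/-- Flipping a coordinate `k` with `d k ≠ 0` moves `d ⬝ᵥ v` by the unit multiple `± d k`, so it
maps the solutions of `d ⬝ᵥ v = 0` injectively to non-solutions. -/
theorem two_mul_card_dotProduct_natCast_eq_zero_le [Fintype ι] [DecidableEq R] {d : ι → R}
    (hd : d ≠ 0) :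
    2 * #{v : ι → Fin 2 | d ⬝ᵥ (fun j => ((v j : ℕ) : R)) = 0} ≤ Fintype.card (ι → Fin 2) := by
  obtain ⟨k, hk⟩ := Function.ne_iff.mp hd
  refine two_mul_card_filter_le_of_injective _ (add_left_injective (Pi.single k (1 : Fin 2)))
    fun v hv hflip => hk ?_
  have hdiff := congrArg (d ⬝ᵥ ·) (natCast_add_single_one_sub (R := R) v k)
  simp only [dotProduct_sub, hv, hflip, dotProduct_single, sub_zero] at hdiff
  exact (isUnit_natCast_add_one_sub_natCast (v k)).mul_left_eq_zero.mp hdiff.symm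

end ZeroOneVectors

open Classical in
/-- Freivalds' test: if row `i` of `C'` differs from row `i` of `A*B`, a uniform
random 0/1 vector `v` detects this with probability at least `1/2`; equivalently,
the number of vectors `v ∈ {0,1}^r` for which the test passes at coordinate `i`
is at most half of all `2^r` vectors. -/
theorem stmt_2 {F : Type*} [Field F] {p q r : ℕ}
    (A : Matrix (Fin p) (Fin q) F) (B : Matrix (Fin q) (Fin r) F)
    (C' : Matrix (Fin p) (Fin r) F) (i : Fin p)
    (hrow : C' i ≠ (A * B) i) :
    2 * (Finset.univ.filter (fun v : Fin r → Fin 2 =>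
        C'.mulVec (fun j => ((v j : ℕ) : F)) i
          = A.mulVec (B.mulVec (fun j => ((v j : ℕ) : F))) i)).card
      ≤ Fintype.card (Fin r → Fin 2) := by
  have hiff (w : Fin r → F) : (C' *ᵥ w) i = (A *ᵥ (B *ᵥ w)) i ↔ (C' i - (A * B) i) ⬝ᵥ w = 0 := by
    rw [mulVec_mulVec, sub_dotProduct, sub_eq_zero]
    rfl
  simp_rw [hiff]
  convert two_mul_card_dotProduct_natCast_eq_zero_le (sub_ne_zero.mpr hrow)
end

section
/- Let P be a set of ℓ distinct indices from {1,…,n}, and let Q be any set of primes with |Q| > ℓ·(ℓ−1)·log₂ n. Then for every i ∈ P there exists a prime p ∈ Q such that for all j ∈ P with j ≠ i, i mod p ≠ j mod p. -/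
/-!
A prime `p` with `i ≡ j [MOD p]` divides `|i - j|`, a nonzero number at most `n`, and such a
number has at most `log₂ n` distinct prime factors since their product, at least `2 ^ ω`, divides
it. So each `j ≠ i` in `P` rules out at most `log₂ n` primes of `Q`, fewer than `|Q|` in total.
-/

open Finset

theorem Nat.two_pow_card_primeFactors_le {d : ℕ} (hd : d ≠ 0) : 2 ^ #d.primeFactors ≤ d :=
  calc 2 ^ #d.primeFactors ≤ ∏ p ∈ d.primeFactors, p :=
        pow_card_le_prod _ _ _ fun _ hp => (Nat.prime_of_mem_primeFactors hp).two_le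
    _ ≤ d := Nat.le_of_dvd (Nat.pos_of_ne_zero hd) (Nat.prod_primeFactors_dvd d)

theorem Nat.card_primeFactors_le_logb {d : ℕ} (hd : d ≠ 0) :
    (#d.primeFactors : ℝ) ≤ Real.logb 2 d := by
  rw [Real.le_logb_iff_rpow_le one_lt_two (by positivity), Real.rpow_natCast]
  exact_mod_cast Nat.two_pow_card_primeFactors_le hd

theorem filter_mod_eq_subset_primeFactors {Q : Finset ℕ} (hQ : ∀ p ∈ Q, p.Prime) {i j : ℕ}
    (hij : i ≠ j) : {p ∈ Q | i % p = j % p} ⊆ ((i : ℤ) - j).natAbs.primeFactors := by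
  intro p hp
  rw [mem_filter] at hp
  have hdvd : (p : ℤ) ∣ (i : ℤ) - j := Nat.modEq_iff_dvd.mp hp.2.symm
  refine Nat.mem_primeFactors.mpr ⟨hQ p hp.1, Int.natCast_dvd.mp hdvd, ?_⟩
  omega

theorem card_filter_mod_eq_le_logb {Q : Finset ℕ} (hQ : ∀ p ∈ Q, p.Prime) {n i j : ℕ}
    (hij : i ≠ j) (hi : i ≤ n) (hj : j ≤ n) :
    (#{p ∈ Q | i % p = j % p} : ℝ) ≤ Real.logb 2 n := by
  set d := ((i : ℤ) - j).natAbs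
  have hd : d ≠ 0 := by omega
  have hdn : (d : ℝ) ≤ n := by exact_mod_cast (show d ≤ n by omega)
  calc (#{p ∈ Q | i % p = j % p} : ℝ) ≤ #d.primeFactors := by
        exact Nat.cast_le.mpr (card_le_card (filter_mod_eq_subset_primeFactors hQ hij))
    _ ≤ Real.logb 2 d := Nat.card_primeFactors_le_logb hd
    _ ≤ Real.logb 2 n := Real.logb_le_logb_of_le one_lt_two (by positivity) hdn

theorem Finset.exists_forall_not_of_card_mul_lt {ι α : Type*} (S : Finset ι) (Q : Finset α)
    (bad : ι → α → Prop) [∀ j, DecidablePred (bad j)] {B : ℝ}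
    (hB : ∀ j ∈ S, (#{p ∈ Q | bad j p} : ℝ) ≤ B) (hlt : #S * B < #Q) :
    ∃ p ∈ Q, ∀ j ∈ S, ¬ bad j p := by
  classical
  by_contra! hall
  have hcover : Q ⊆ S.biUnion fun j => {p ∈ Q | bad j p} := by
    intro p hp
    obtain ⟨j, hj, hbad⟩ := hall p hp
    exact mem_biUnion.mpr ⟨j, hj, mem_filter.mpr ⟨hp, hbad⟩⟩
  have : (#Q : ℝ) ≤ #S * B :=
    calc (#Q : ℝ) ≤ ∑ j ∈ S, (#{p ∈ Q | bad j p} : ℝ) := by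
          exact_mod_cast (card_le_card hcover).trans card_biUnion_le
      _ ≤ ∑ _j ∈ S, B := sum_le_sum hB
      _ = #S * B := by rw [sum_const, nsmul_eq_mul]
  linarith

theorem stmt_7 (n : ℕ) (P : Finset ℕ) (hP : P ⊆ Finset.Icc 1 n)
    (Q : Finset ℕ) (hQprime : ∀ p ∈ Q, p.Prime)
    (hQcard : (P.card : ℝ) * ((P.card : ℝ) - 1) * Real.logb 2 n < (Q.card : ℝ)) :
    ∀ i ∈ P, ∃ p ∈ Q, ∀ j ∈ P, j ≠ i → i % p ≠ j % p := by
  intro i hi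
  have hle : ∀ j ∈ P, j ≤ n := fun j hj => (mem_Icc.mp (hP hj)).2
  have hcard : (1 : ℝ) ≤ #P := by exact_mod_cast card_pos.mpr ⟨i, hi⟩
  have hlog : 0 ≤ Real.logb 2 n :=
    Real.logb_nonneg one_lt_two (by exact_mod_cast (mem_Icc.mp (hP hi)).1.trans (hle i hi))
  have hlt : (#(P.erase i) : ℝ) * Real.logb 2 n < #Q := by
    rw [card_erase_of_mem hi, Nat.cast_sub (by exact_mod_cast hcard), Nat.cast_one]
    nlinarith
  obtain ⟨p, hpQ, hp⟩ := exists_forall_not_of_card_mul_lt (P.erase i) Q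
    (fun j p => i % p = j % p) (fun j hj => card_filter_mod_eq_le_logb hQprime
      (ne_of_mem_erase hj).symm (hle i hi) (hle j (mem_of_mem_erase hj))) hlt
  exact ⟨p, hpQ, fun j hj hji => hp j (mem_erase.mpr ⟨hji, hj⟩)⟩
end
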